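/- Let M be a matroid on a nonempty finite ground set E such that every circuit of M has at least 4 elements (i.e. girth(M) ≥ 4). Then for all a,b,c,d ∈ E the identity u_{ab}u_{cd}u_{ab} = u_{ab}u_{cd} holds in QAut_ℐ(M). -/

import Mathlib

/-!
STATEMENT 12: Let M be a matroid on a nonempty finite ground set E such that every
circuit of M has at least 4 elements (girth(M) ≥ 4).  Then for all a,b,c,d ∈ E the
identity u_{ab}u_{cd}u_{ab} = u_{ab}u_{cd} holds in QAut_ℐ(M).

We model a matroid on E as a Mathlib `Matroid E` with ground set all of `E`, and the
defining ideal of QAut_ℐ(M) (an ideal of 𝔖⁺(E)) by its preimage `qIdeal E 𝒜` in ℂ⟨E²⟩,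
where `𝒜` is the set of independent tuples.  An equation `x = y` in QAut_ℐ(M) is the
membership `x - y ∈ qIdeal E 𝒜`.  Circuits are the minimal dependent sets.
-/

noncomputable section

/-- The generator `u_{ij}` of `ℂ⟨E²⟩`. -/
def u (E : Type) (i j : E) : FreeAlgebra ℂ (E × E) :=
  FreeAlgebra.ι ℂ (i, j)

/-- The defining relations of the quantum symmetric group `𝔖⁺(E)`. -/
def symRels (E : Type) [Fintype E] : Set (FreeAlgebra ℂ (E × E)) :=
  {x | ∃ i j : E, x = u E i j * u E i j - u E i j} ∪
  {x | ∃ i k l : E, k ≠ l ∧ x = u E i k * u E i l} ∪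
  {x | ∃ j k l : E, k ≠ l ∧ x = u E k j * u E l j} ∪
  {x | ∃ j : E, x = (∑ k : E, u E k j) - 1} ∪
  {x | ∃ i : E, x = (∑ k : E, u E i k) - 1}

/-- For tuples `A B : Fin k → E`, the (ordered, noncommutative) product
`u_{AB} = u_{a₁b₁} ⋯ u_{a_k b_k}`. -/
def uProd (E : Type) {k : ℕ} (A B : Fin k → E) : FreeAlgebra ℂ (E × E) :=
  (List.ofFn fun t => u E (A t) (B t)).prod

/-- Tuples of elements of `E` (of arbitrary length). -/
abbrev Tup (E : Type) := Σ k : ℕ, Fin k → E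

/-- The elements `u_{AB}` where exactly one of the tuples `A`, `B` lies in `𝒜`. -/
def tupleGens (E : Type) (𝒜 : Set (Tup E)) : Set (FreeAlgebra ℂ (E × E)) :=
  {x | ∃ (k : ℕ) (A B : Fin k → E),
    Xor' (⟨k, A⟩ ∈ 𝒜) (⟨k, B⟩ ∈ 𝒜) ∧ x = uProd E A B}

/-- The preimage in `ℂ⟨E²⟩` of the ideal `I_𝒜` of `𝔖⁺(E)`. -/
def qIdeal (E : Type) [Fintype E] (𝒜 : Set (Tup E)) :
    TwoSidedIdeal (FreeAlgebra ℂ (E × E)) :=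
  TwoSidedIdeal.span (symRels E ∪ tupleGens E 𝒜)

/-- Independent tuples of a matroid: repetition-free tuples whose underlying set
is independent. -/
def indepTuples {E : Type} (M : Matroid E) : Set (Tup E) :=
  {T | Function.Injective T.2 ∧ M.Indep (Set.range T.2)}

/-- A circuit of a matroid: a minimal dependent set. -/
def IsCircuitSet {E : Type} (M : Matroid E) (C : Set E) : Prop :=
  ¬ M.Indep C ∧ ∀ a ∈ C, M.Indep (C \ {a})

/-!
Right-multiplying by the column sum `∑ₑ u_{eb} = 1` turns `u_{ab}u_{cd}u_{ab} - u_{ab}u_{cd}` into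
`-∑_{e ≠ a} u_{ab}u_{cd}u_{eb}` modulo the ideal. When `a, c, e` are distinct and `b ≠ d`, the set
`{a, c, e}` has fewer elements than the girth, so `(a, c, e)` is an independent tuple while
`(b, d, b)` is not, and `u_{ab}u_{cd}u_{eb}` is a defining generator of `QAut_ℐ(M)`. All remaining
cases die by the orthogonality and idempotence relations of `𝔖⁺(E)`.
-/

section QuantumSymmetricRelations

variable {E : Type} [Fintype E] {𝒜 : Set (Tup E)}

theorem u_mul_u_sub_u_mem_qIdeal (i j : E) : u E i j * u E i j - u E i j ∈ qIdeal E 𝒜 :=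
  TwoSidedIdeal.subset_span (Or.inl (Or.inl (Or.inl (Or.inl (Or.inl ⟨i, j, rfl⟩)))))

theorem u_mul_u_mem_qIdeal_of_ne_right (i : E) {k l : E} (hkl : k ≠ l) :
    u E i k * u E i l ∈ qIdeal E 𝒜 :=
  TwoSidedIdeal.subset_span (Or.inl (Or.inl (Or.inl (Or.inl (Or.inr ⟨i, k, l, hkl, rfl⟩)))))

theorem u_mul_u_mem_qIdeal_of_ne_left (j : E) {k l : E} (hkl : k ≠ l) :
    u E k j * u E l j ∈ qIdeal E 𝒜 :=
  TwoSidedIdeal.subset_span (Or.inl (Or.inl (Or.inl (Or.inr ⟨j, k, l, hkl, rfl⟩))))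

theorem sum_u_sub_one_mem_qIdeal (j : E) : (∑ k : E, u E k j) - 1 ∈ qIdeal E 𝒜 :=
  TwoSidedIdeal.subset_span (Or.inl (Or.inl (Or.inr ⟨j, rfl⟩)))

theorem uProd_mem_qIdeal_of_xor {k : ℕ} {A B : Fin k → E}
    (h : Xor' (⟨k, A⟩ ∈ 𝒜) (⟨k, B⟩ ∈ 𝒜)) : uProd E A B ∈ qIdeal E 𝒜 :=
  TwoSidedIdeal.subset_span (Or.inr ⟨k, A, B, h, rfl⟩)

theorem mul_u_sub_self_mem_qIdeal {x : FreeAlgebra ℂ (E × E)} {a b : E}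
    (h : ∀ e ≠ a, x * u E e b ∈ qIdeal E 𝒜) : x * u E a b - x ∈ qIdeal E 𝒜 := by
  classical
  have hsplit : x * u E a b - x
      = x * ((∑ e : E, u E e b) - 1) - ∑ e ∈ Finset.univ.erase a, x * u E e b := by
    rw [mul_sub, mul_one, Finset.mul_sum, ← Finset.add_sum_erase _ _ (Finset.mem_univ a)]
    abel
  rw [hsplit]
  exact (qIdeal E 𝒜).sub_mem ((qIdeal E 𝒜).mul_mem_left x _ (sum_u_sub_one_mem_qIdeal b))
    (sum_mem fun e he => h e (Finset.ne_of_mem_erase he))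

end QuantumSymmetricRelations

theorem uProd_three {E : Type} (a c e b d f : E) :
    uProd E ![a, c, e] ![b, d, f] = u E a b * u E c d * u E e f := by
  simp [uProd, List.ofFn_succ, mul_assoc]

section Girth

variable {E : Type} [Finite E] {M : Matroid E} {n : ℕ}

theorem exists_isCircuitSet_subset_of_not_indep {s : Set E} (hs : ¬ M.Indep s) :
    ∃ C ⊆ s, IsCircuitSet M C := by
  obtain ⟨C, hCs, hmin⟩ := exists_minimal_le_of_wellFoundedLT (fun C => ¬ M.Indep C) s hs
  refine ⟨C, hCs, hmin.prop, fun a ha => ?_⟩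
  by_contra hdep
  exact (Set.sdiff_singleton_ssubset.mpr ha).not_ge (hmin.le_of_le hdep Set.sdiff_subset)

theorem indep_of_ncard_lt_girth (hgirth : ∀ C : Set E, IsCircuitSet M C → n ≤ C.ncard)
    {s : Set E} (hs : s.ncard < n) : M.Indep s := by
  by_contra hdep
  obtain ⟨C, hCs, hC⟩ := exists_isCircuitSet_subset_of_not_indep hdep
  have := Set.ncard_le_ncard hCs (Set.toFinite s)
  have := hgirth C hC
  omega

theorem mem_indepTuples_of_lt_girth (hgirth : ∀ C : Set E, IsCircuitSet M C → n ≤ C.ncard)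
    {k : ℕ} {A : Fin k → E} (hA : Function.Injective A) (hk : k < n) :
    ⟨k, A⟩ ∈ indepTuples M :=
  ⟨hA, indep_of_ncard_lt_girth hgirth (by rwa [Set.ncard_range_of_injective hA, Nat.card_fin])⟩

end Girth

theorem u_mul_u_mul_u_mem_qIdeal_of_girth_ge_four {E : Type} [Fintype E] {M : Matroid E}
    (hgirth : ∀ C : Set E, IsCircuitSet M C → 4 ≤ C.ncard)
    {a b c d e : E} (hac : a ≠ c) (hbd : b ≠ d) (hea : e ≠ a) :
    u E a b * u E c d * u E e b ∈ qIdeal E (indepTuples M) := by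
  by_cases hce : c = e
  · subst hce
    rw [mul_assoc]
    exact (qIdeal E _).mul_mem_left _ _ (u_mul_u_mem_qIdeal_of_ne_right c hbd.symm)
  · have hA : Function.Injective ![a, c, e] := by
      simp only [Matrix.vecCons, Fin.cons_injective_iff]
      simp [hac, hce, hea.symm, Function.injective_of_subsingleton]
    have hB : ¬ Function.Injective ![b, d, b] := fun h => absurd (@h 0 2 rfl) (by decide)
    rw [← uProd_three]
    exact uProd_mem_qIdeal_of_xor
      (Or.inl ⟨mem_indepTuples_of_lt_girth hgirth hA (by norm_num), fun h => hB h.1⟩)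

theorem uProd_idem_of_girth_ge_four_general (E : Type) [Fintype E]
    (M : Matroid E)
    (hgirth : ∀ C : Set E, IsCircuitSet M C → 4 ≤ C.ncard) :
    ∀ a b c d : E,
      u E a b * u E c d * u E a b - u E a b * u E c d
        ∈ qIdeal E (indepTuples M) := by
  intro a b c d
  set I := qIdeal E (indepTuples M)
  by_cases hac : a = c <;> by_cases hbd : b = d
  · subst hac hbd
    have h := I.mul_mem_left (u E a b) _ (u_mul_u_sub_u_mem_qIdeal (𝒜 := indepTuples M) a b)
    rwa [mul_sub, ← mul_assoc] at h
  · subst hac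
    have h : u E a b * u E a d ∈ I := u_mul_u_mem_qIdeal_of_ne_right a hbd
    exact I.sub_mem (I.mul_mem_right _ _ h) h
  · subst hbd
    have h : u E a b * u E c b ∈ I := u_mul_u_mem_qIdeal_of_ne_left b hac
    exact I.sub_mem (I.mul_mem_right _ _ h) h
  · exact mul_u_sub_self_mem_qIdeal fun e hea =>
      u_mul_u_mul_u_mem_qIdeal_of_girth_ge_four hgirth hac hbd hea

/-- If every circuit of `M` has at least 4 elements, then
`u_{ab}u_{cd}u_{ab} = u_{ab}u_{cd}` holds in `QAut_ℐ(M)` for all `a, b, c, d ∈ E`. -/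
theorem uProd_idem_of_girth_ge_four (E : Type) [Fintype E] [Nonempty E]
    (M : Matroid E) (hM : M.E = Set.univ)
    (hgirth : ∀ C : Set E, IsCircuitSet M C → 4 ≤ C.ncard) :
    ∀ a b c d : E,
      u E a b * u E c d * u E a b - u E a b * u E c d
        ∈ qIdeal E (indepTuples M) :=
  uProd_idem_of_girth_ge_four_general E M hgirth

end
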